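/- arXiv:2506.17470 — 3 statements merged into one kernel-verified Lean document; each statement's English description precedes it below -/
import Mathlib

section
/- Let 0 < p < r ≤ 1, set m := r/p > 1, and let (H_i)_{i≥1} be i.i.d. positive-integer-valued random variables with tail ℙ(H > n) = (r−p)/((1−p)m^n − (1−r)) for all integers n ≥ 0. Let y ∈ (0,1), let J be geometric with ℙ(J = j) = y(1−y)^{j−1} (j ≥ 1) independent of (H_i), and set M^y := max_{1 ≤ i ≤ J} H_i. Then for every integer n ≥ 0, ℙ(M^y > n) = (r−p)/(y(1−p)m^n − (y(1−p) − (r−p))). -/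
/-!
Independence gives `ℙ(M^y ≤ n, J = j) = ℙ(J = j) q ^ j` with `q = ℙ(H ≤ n)`, so
`ℙ(M^y ≤ n) = 𝔼[q ^ J] = y q / (1 - (1 - y) q)`, the generating function of the geometric law.
Both this map and the tail `ℙ(H > n) = (r - p) / D`, `D = (1 - p) m ^ n - (1 - r)`, are linear
fractional, hence so is the composite:
`1 - y q / (1 - (1 - y) q) = (r - p) / (y D + (1 - y) (r - p))`.
-/

open MeasureTheory ProbabilityTheory

noncomputable def geomPGF (y s : ℝ) : ℝ := y * s / (1 - (1 - y) * s)

lemma hasSum_geomPGF {g : ℕ → ℝ} {y s : ℝ} (hy0 : 0 < y) (hy1 : y ≤ 1) (hs0 : 0 ≤ s)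
    (hs1 : s ≤ 1) (hg0 : g 0 = 0) (hg : ∀ j, g (j + 1) = y * (1 - y) ^ j) :
    HasSum (fun j => g j * s ^ j) (geomPGF y s) := by
  have hratio : (1 - y) * s < 1 := by nlinarith
  have hgeom : HasSum (fun j : ℕ => g (j + 1) * s ^ (j + 1)) (geomPGF y s) := by
    have hterm :
        (fun j : ℕ => g (j + 1) * s ^ (j + 1)) = fun j => y * s * ((1 - y) * s) ^ j := by
      funext j
      rw [hg, mul_pow, pow_succ]; ring
    rw [hterm, geomPGF, div_eq_mul_inv]
    exact (hasSum_geometric_of_lt_one (by positivity) hratio).mul_left (y * s)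
  simpa [hg0] using (hasSum_nat_add_iff (f := fun j => g j * s ^ j) 1).mp hgeom

lemma one_sub_geomPGF_one_sub_div {a D y : ℝ} (hD : D ≠ 0) (h : y * D + (1 - y) * a ≠ 0) :
    1 - geomPGF y (1 - a / D) = a / (y * D + (1 - y) * a) := by
  have hden : 1 - (1 - y) * (1 - a / D) = (y * D + (1 - y) * a) / D := by
    field_simp; ring
  rw [geomPGF, hden, div_div_eq_mul_div, one_sub_div h]
  congr 1
  field_simp
  ring

section RandomlyIndexedEvents

variable {Ω β : Type*} {H : ℕ → Ω → β} {J : Ω → ℕ} {S : Set β}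

lemma setOf_forall_mem_Icc_eq_iUnion :
    {ω | ∀ i ∈ Finset.Icc 1 (J ω), H i ω ∈ S}
      = ⋃ j, J ⁻¹' {j} ∩ (fun ω i => H i ω) ⁻¹' Set.pi (Finset.Icc 1 j) fun _ => S := by
  ext ω
  simp

variable [MeasurableSpace Ω] [MeasurableSpace β] {P : Measure Ω}

lemma measurableSet_forall_mem_Icc (hmeas : ∀ i, Measurable (H i)) (hJmeas : Measurable J)
    (hS : MeasurableSet S) : MeasurableSet {ω | ∀ i ∈ Finset.Icc 1 (J ω), H i ω ∈ S} := by
  rw [setOf_forall_mem_Icc_eq_iUnion]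
  exact .iUnion fun j => (hJmeas (measurableSet_singleton j)).inter <|
    measurable_pi_lambda _ hmeas (.pi (Finset.countable_toSet _) fun _ _ => hS)

lemma measure_preimage_pi_Icc_eq_pow (hindep : iIndepFun H P)
    (hident : ∀ i, IdentDistrib (H i) (H 1) P P) (hS : MeasurableSet S) (j : ℕ) :
    P ((fun ω i => H i ω) ⁻¹' Set.pi (Finset.Icc 1 j) fun _ => S) = P (H 1 ⁻¹' S) ^ j := by
  have hset : ((fun ω i => H i ω) ⁻¹' Set.pi (Finset.Icc 1 j) fun _ => S)
      = ⋂ i ∈ Finset.Icc 1 j, H i ⁻¹' S := by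
    ext; simp
  rw [hset, hindep.meas_biInter fun i _ => ⟨S, hS, rfl⟩,
    Finset.prod_congr rfl fun i _ => (hident i).measure_mem_eq hS]
  simp

lemma measure_forall_mem_Icc_eq_tsum (hmeas : ∀ i, Measurable (H i)) (hindep : iIndepFun H P)
    (hident : ∀ i, IdentDistrib (H i) (H 1) P P) (hJmeas : Measurable J)
    (hJindep : IndepFun J (fun ω i => H i ω) P) (hS : MeasurableSet S) :
    P {ω | ∀ i ∈ Finset.Icc 1 (J ω), H i ω ∈ S}
      = ∑' j, P (J ⁻¹' {j}) * P (H 1 ⁻¹' S) ^ j := by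
  have hpi : ∀ j, MeasurableSet (Set.pi (Finset.Icc 1 j : Set ℕ) fun _ => S) :=
    fun j => .pi (Finset.countable_toSet _) fun _ _ => hS
  rw [setOf_forall_mem_Icc_eq_iUnion, measure_iUnion]
  · refine tsum_congr fun j => ?_
    rw [hJindep.measure_inter_preimage_eq_mul _ _ (measurableSet_singleton j) (hpi j),
      measure_preimage_pi_Icc_eq_pow hindep hident hS]
  · exact fun i j hij =>
      (pairwise_disjoint_fiber J hij).mono Set.inter_subset_left Set.inter_subset_left
  · exact fun j =>
      (hJmeas (measurableSet_singleton j)).inter (measurable_pi_lambda _ hmeas (hpi j))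

lemma measureReal_forall_mem_Icc_eq_geomPGF [IsProbabilityMeasure P]
    (hmeas : ∀ i, Measurable (H i)) (hindep : iIndepFun H P)
    (hident : ∀ i, IdentDistrib (H i) (H 1) P P) (hJmeas : Measurable J)
    (hJindep : IndepFun J (fun ω i => H i ω) P) (hS : MeasurableSet S) {y : ℝ} (hy0 : 0 < y)
    (hy1 : y ≤ 1) (hJpos : ∀ ω, 1 ≤ J ω)
    (hJgeom : ∀ j, 1 ≤ j → P.real (J ⁻¹' {j}) = y * (1 - y) ^ (j - 1)) :
    P.real {ω | ∀ i ∈ Finset.Icc 1 (J ω), H i ω ∈ S} = geomPGF y (P.real (H 1 ⁻¹' S)) := by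
  have hJ0 : J ⁻¹' {0} = ∅ := Set.eq_empty_of_forall_notMem fun ω h => by
    simpa [show J ω = 0 from h] using hJpos ω
  have hsum := hasSum_geomPGF (g := fun j => P.real (J ⁻¹' {j})) (s := P.real (H 1 ⁻¹' S))
    hy0 hy1 measureReal_nonneg measureReal_le_one (by simp [hJ0])
    fun j => by simpa using hJgeom (j + 1) (by omega)
  rw [measureReal_def, measure_forall_mem_Icc_eq_tsum hmeas hindep hident hJmeas hJindep hS,
    ENNReal.tsum_toReal_eq fun _ => by finiteness, ← hsum.tsum_eq]
  simp [measureReal_def]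

end RandomlyIndexedEvents

theorem stmt_3_general
    {Ω : Type*} [MeasurableSpace Ω] (P : Measure Ω) [IsProbabilityMeasure P]
    (p r : ℝ) (hpr : p < r) (hr : r ≤ 1)
    (m : ℝ) (hm1 : 1 < m)
    (H : ℕ → Ω → ℕ)
    (hmeas : ∀ i, Measurable (H i))
    (hindep : iIndepFun H P)
    (hident : ∀ i, IdentDistrib (H i) (H 1) P P)
    (htail : ∀ n : ℕ, (P {ω | n < H 1 ω}).toReal = (r - p) / ((1 - p) * m ^ n - (1 - r)))
    (y : ℝ) (hy : y ∈ Set.Ioo (0 : ℝ) 1)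
    (J : Ω → ℕ) (hJmeas : Measurable J) (hJpos : ∀ ω, 1 ≤ J ω)
    (hJgeom : ∀ j : ℕ, 1 ≤ j → (P {ω | J ω = j}).toReal = y * (1 - y) ^ (j - 1))
    (hJindep : IndepFun J (fun ω => fun i => H i ω) P)
    (M : Ω → ℕ) (hM : ∀ ω, M ω = (Finset.Icc 1 (J ω)).sup (fun i => H i ω))
    (n : ℕ) :
    (P {ω | n < M ω}).toReal
      = (r - p) / (y * (1 - p) * m ^ n - (y * (1 - p) - (r - p))) := by
  obtain ⟨hy0, hy1⟩ := hy
  set D := (1 - p) * m ^ n - (1 - r)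
  have hD : r - p ≤ D := by nlinarith [one_le_pow₀ (n := n) hm1.le]
  have hMle : {ω | M ω ≤ n} = {ω | ∀ i ∈ Finset.Icc 1 (J ω), H i ω ∈ Set.Iic n} := by
    ext ω
    simp [hM]
  have hHle : P.real (H 1 ⁻¹' Set.Iic n) = 1 - (r - p) / D := by
    rw [← htail n, ← measureReal_def,
      ← probReal_compl_eq_one_sub (measurableSet_lt measurable_const (hmeas 1))]
    congr 1
    ext ω
    simp
  have hMgt : {ω | n < M ω} = {ω | M ω ≤ n}ᶜ := by
    ext ω
    simp
  calc (P {ω | n < M ω}).toReal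
      = 1 - P.real {ω | ∀ i ∈ Finset.Icc 1 (J ω), H i ω ∈ Set.Iic n} := by
        rw [← measureReal_def, hMgt, hMle, probReal_compl_eq_one_sub
          (measurableSet_forall_mem_Icc hmeas hJmeas measurableSet_Iic)]
    _ = 1 - geomPGF y (1 - (r - p) / D) := by
        rw [measureReal_forall_mem_Icc_eq_geomPGF hmeas hindep hident hJmeas hJindep
          measurableSet_Iic hy0 hy1.le hJpos hJgeom, hHle]
    _ = (r - p) / (y * D + (1 - y) * (r - p)) :=
        one_sub_geomPGF_one_sub_div (by linarith) (by nlinarith)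
    _ = (r - p) / (y * (1 - p) * m ^ n - (y * (1 - p) - (r - p))) := by
        congr 1
        ring

/-- For the linear-fractional coalescent point process with
`ℙ(H > n) = (r-p)/((1-p) m^n - (1-r))` (`m = r/p > 1`), Bernoulli(y) sampling gives branch
lengths `M^y = max_{1 ≤ i ≤ J} H_i` (J geometric(y), independent of `(H_i)`) with
`ℙ(M^y > n) = (r-p)/(y(1-p) m^n - (y(1-p) - (r-p)))`. -/
theorem stmt_3
    {Ω : Type*} [MeasurableSpace Ω] (P : Measure Ω) [IsProbabilityMeasure P]
    (p r : ℝ) (hp : 0 < p) (hpr : p < r) (hr : r ≤ 1)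
    (m : ℝ) (hm : m = r / p) (hm1 : 1 < m)
    (H : ℕ → Ω → ℕ)
    (hmeas : ∀ i, Measurable (H i))
    (hindep : iIndepFun H P)
    (hident : ∀ i, IdentDistrib (H i) (H 1) P P)
    (hpos : ∀ i ω, 1 ≤ H i ω)
    (htail : ∀ n : ℕ, (P {ω | n < H 1 ω}).toReal = (r - p) / ((1 - p) * m ^ n - (1 - r)))
    (y : ℝ) (hy : y ∈ Set.Ioo (0 : ℝ) 1)
    (J : Ω → ℕ) (hJmeas : Measurable J) (hJpos : ∀ ω, 1 ≤ J ω)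
    (hJgeom : ∀ j : ℕ, 1 ≤ j → (P {ω | J ω = j}).toReal = y * (1 - y) ^ (j - 1))
    (hJindep : IndepFun J (fun ω => fun i => H i ω) P)
    (M : Ω → ℕ) (hM : ∀ ω, M ω = (Finset.Icc 1 (J ω)).sup (fun i => H i ω))
    (n : ℕ) :
    (P {ω | n < M ω}).toReal
      = (r - p) / (y * (1 - p) * m ^ n - (y * (1 - p) - (r - p))) :=
  stmt_3_general P p r hpr hr m hm1 H hmeas hindep hident htail y hy J hJmeas hJpos hJgeom hJindep M
    hM n
end

section
/- Let (H_i)_{i≥1} be an i.i.d. sequence of positive-integer-valued random variables and let (G_j)_{j≥1} be an i.i.d. sequence of geometric random variables with ℙ(G = g) = y(1−y)^{g−1} for g ≥ 1 and some y ∈ (0,1), independent of (H_i). Set S_0 := 0, S_j := G_1 + ⋯ + G_j, and define the block maxima M_j := max{H_i : S_{j−1} < i ≤ S_j} for j ≥ 1. Then the sequence (M_j)_{j≥1} is i.i.d. -/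
open MeasureTheory ProbabilityTheory Finset Function

/-!
Once the block lengths are fixed, the blocks are disjoint sets of indices, so the block maxima
are independent, and the law of each depends only on the length of its block, since
`P (max of n of the H_i ≤ t) = P (H ≤ t) ^ n`. As `H` is independent of `G`, the joint law of
finitely many block maxima is obtained by integrating this product over the law of `G`; the
lengths of distinct blocks are independent copies of `G 1`, so the integral of the product splits
into a product of identical integrals.
-/

theorem Finset.measurable_sup {α δ ι : Type*} [MeasurableSpace α] {_ : MeasurableSpace δ}
    [SemilatticeSup α] [OrderBot α] [MeasurableSup₂ α] {s : Finset ι} {f : ι → δ → α}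
    (hf : ∀ i ∈ s, Measurable (f i)) : Measurable fun x => s.sup (f · x) := by
  simp_rw [← Finset.sup_apply]
  exact Finset.sup_induction measurable_const (fun _ h₁ _ h₂ => h₁.sup h₂) hf

theorem ProbabilityTheory.IndepFun.measure_preimage_eq_lintegral {Ω α β : Type*}
    [MeasurableSpace Ω] [MeasurableSpace α] [MeasurableSpace β] {P : Measure Ω}
    [IsFiniteMeasure P] {X : Ω → α} {Y : Ω → β} (hXY : IndepFun X Y P) (hX : Measurable X)
    (hY : Measurable Y) {A : Set (α × β)} (hA : MeasurableSet A) :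
    P ((fun ω => (X ω, Y ω)) ⁻¹' A) = ∫⁻ ω, P ((fun ω' => (X ω', Y ω)) ⁻¹' A) ∂P :=
  calc P ((fun ω => (X ω, Y ω)) ⁻¹' A)
      = (P.map X).prod (P.map Y) A := by
        rw [← (indepFun_iff_map_prod_eq_prod_map_map hX.aemeasurable hY.aemeasurable).1 hXY,
          Measure.map_apply (hX.prodMk hY) hA]
    _ = ∫⁻ y, P.map X ((fun x => (x, y)) ⁻¹' A) ∂(P.map Y) := Measure.prod_apply_symm hA
    _ = ∫⁻ ω, P.map X ((fun x => (x, Y ω)) ⁻¹' A) ∂P :=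
        lintegral_map (measurable_measure_prodMk_right hA) hY
    _ = ∫⁻ ω, P ((fun ω' => (X ω', Y ω)) ⁻¹' A) ∂P := by
        simp_rw [Measure.map_apply hX (measurable_prodMk_right hA)]; rfl

section FinsetSup

variable {Ω ι : Type*} [MeasurableSpace Ω] {P : Measure Ω} {H : ι → Ω → ℕ}

theorem measure_finset_sup_le {i₀ : ι} (hindep : iIndepFun H P)
    (hident : ∀ i, IdentDistrib (H i) (H i₀) P P) (I : Finset ι) (t : ℕ) :
    P {ω | I.sup (H · ω) ≤ t} = P {ω | H i₀ ω ≤ t} ^ #I := by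
  have hset : {ω | I.sup (H · ω) ≤ t} = ⋂ i ∈ I, H i ⁻¹' Set.Iic t := by
    ext ω; simp [Finset.sup_le_iff]
  rw [hset, hindep.meas_biInter fun i _ => ⟨Set.Iic t, measurableSet_Iic, rfl⟩,
    Finset.prod_congr rfl fun i _ => (hident i).measure_mem_eq measurableSet_Iic,
    Finset.prod_const]
  rfl

theorem identDistrib_finset_sup_of_card_eq [IsFiniteMeasure P] {i₀ : ι}
    (hmeas : ∀ i, Measurable (H i)) (hindep : iIndepFun H P)
    (hident : ∀ i, IdentDistrib (H i) (H i₀) P P) {I J : Finset ι} (hIJ : #I = #J) :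
    IdentDistrib (fun ω => I.sup (H · ω)) (fun ω => J.sup (H · ω)) P P := by
  have hsup : ∀ K : Finset ι, Measurable fun ω => K.sup (H · ω) :=
    fun K => Finset.measurable_sup fun i _ => hmeas i
  refine ⟨(hsup I).aemeasurable, (hsup J).aemeasurable,
    Measure.ext_of_Iic _ _ fun t => ?_⟩
  rw [Measure.map_apply (hsup I) measurableSet_Iic, Measure.map_apply (hsup J) measurableSet_Iic]
  exact (measure_finset_sup_le hindep hident I t).trans
    (hIJ ▸ (measure_finset_sup_le hindep hident J t).symm)

theorem iIndepFun_finset_sup {κ : Type*} (hmeas : ∀ i, Measurable (H i))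
    (hindep : iIndepFun H P) {I : κ → Finset ι} (hI : Pairwise (Disjoint on I)) :
    iIndepFun (fun j ω => (I j).sup (H · ω)) P := by
  classical
  have hmeas_sup : ∀ (T : Set ι) j, ↑(I j) ⊆ T →
      Measurable[⨆ i ∈ T, MeasurableSpace.comap (H i) inferInstance]
        fun ω => (I j).sup (H · ω) := fun T j hjT =>
    Finset.measurable_sup fun i hi => measurable_iff_comap_le.2 <|
      le_iSup₂ (f := fun i (_ : i ∈ T) => MeasurableSpace.comap (H i) inferInstance) i (hjT hi)
  rw [iIndepFun_iff_measure_inter_preimage_eq_mul]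
  intro S B hB
  induction S using Finset.induction with
  | empty => have := hindep.isProbabilityMeasure; simp
  | @insert a S ha ih =>
    have hdisj : Disjoint (↑(I a) : Set ι) (⋃ j ∈ S, ↑(I j)) := by
      refine Set.disjoint_iUnion₂_right.2 fun j hj => Finset.disjoint_coe.2 (hI ?_)
      rintro rfl; exact ha hj
    have hindep_blocks := indep_iSup_of_disjoint (fun i => (hmeas i).comap_le)
      hindep.iIndep hdisj
    rw [Finset.set_biInter_insert, Finset.prod_insert ha,
      ← ih fun j hj => hB j (Finset.mem_insert_of_mem hj)]
    refine (Indep_iff _ _ _).1 hindep_blocks _ _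
      (hmeas_sup _ a subset_rfl (hB a (Finset.mem_insert_self a S))) ?_
    exact Finset.measurableSet_biInter S fun j hj =>
      hmeas_sup _ j (Set.subset_biUnion_of_mem (u := fun j => (↑(I j) : Set ι)) hj)
        (hB j (Finset.mem_insert_of_mem hj))

end FinsetSup

-- Block `j` (counted from `0`) has length `g (j + 1)`; the value `g 0` is never used.
def blockEnd (g : ℕ → ℕ) (j : ℕ) : ℕ := ∑ l ∈ Icc 1 j, g l

def blockMax (h g : ℕ → ℕ) (j : ℕ) : ℕ := (Ioc (blockEnd g j) (blockEnd g (j + 1))).sup h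

theorem blockEnd_succ (g : ℕ → ℕ) (j : ℕ) : blockEnd g (j + 1) = blockEnd g j + g (j + 1) :=
  Finset.sum_Icc_succ_top (Nat.le_add_left 1 j) g

theorem card_Ioc_blockEnd (g : ℕ → ℕ) (j : ℕ) :
    #(Ioc (blockEnd g j) (blockEnd g (j + 1))) = g (j + 1) := by
  rw [Nat.card_Ioc, blockEnd_succ, Nat.add_sub_cancel_left]

theorem pairwise_disjoint_Ioc_blockEnd (g : ℕ → ℕ) :
    Pairwise (Disjoint on fun j => Ioc (blockEnd g j) (blockEnd g (j + 1))) := by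
  have hmono : Monotone (blockEnd g) := monotone_nat_of_le_succ fun j => by
    rw [blockEnd_succ]; exact Nat.le_add_right _ _
  intro i j hij
  simpa [← Finset.disjoint_coe] using hmono.pairwise_disjoint_on_Ioc_succ hij

theorem measurable_blockMax (j : ℕ) :
    Measurable fun p : (ℕ → ℕ) × (ℕ → ℕ) => blockMax p.1 p.2 j := by
  have hEnd : ∀ k, Measurable fun g : ℕ → ℕ => blockEnd g k :=
    fun k => Finset.measurable_sum _ fun l _ => measurable_pi_apply l
  have hsup : Measurable fun q : (ℕ → ℕ) × (ℕ × ℕ) => (Ioc q.2.1 q.2.2).sup q.1 :=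
    measurable_from_prod_countable_left fun q =>
      Finset.measurable_sup (s := Ioc q.1 q.2) fun i _ => measurable_pi_apply i
  exact hsup.comp (measurable_fst.prodMk ((hEnd j).comp measurable_snd |>.prodMk
    ((hEnd (j + 1)).comp measurable_snd)))

section BlockMaxima

variable {Ω : Type*} [MeasurableSpace Ω] {P : Measure Ω} {H G : ℕ → Ω → ℕ} {i₀ j₀ : ℕ}

theorem measure_iInter_blockMax_eq_prod [IsFiniteMeasure P] (hHmeas : ∀ i, Measurable (H i))
    (hHindep : iIndepFun H P) (hHident : ∀ i, IdentDistrib (H i) (H i₀) P P)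
    (g : ℕ → ℕ) (s : Finset ℕ) {B : ℕ → Set ℕ} (hB : ∀ j ∈ s, MeasurableSet (B j)) :
    P (⋂ j ∈ s, {ω | blockMax (H · ω) g j ∈ B j})
      = ∏ j ∈ s, P {ω | (range (g (j + 1))).sup (H · ω) ∈ B j} := by
  refine ((iIndepFun_finset_sup hHmeas hHindep (pairwise_disjoint_Ioc_blockEnd g)
    ).measure_inter_preimage_eq_mul s hB).trans (Finset.prod_congr rfl fun j hj => ?_)
  refine (identDistrib_finset_sup_of_card_eq hHmeas hHindep hHident ?_).measure_mem_eq (hB j hj)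
  rw [card_Ioc_blockEnd, card_range]

theorem measure_iInter_blockMax_eq_prod_lintegral [IsProbabilityMeasure P]
    (hHmeas : ∀ i, Measurable (H i)) (hHindep : iIndepFun H P)
    (hHident : ∀ i, IdentDistrib (H i) (H i₀) P P)
    (hGmeas : ∀ j, Measurable (G j)) (hGindep : iIndepFun G P)
    (hGident : ∀ j, IdentDistrib (G j) (G j₀) P P)
    (hHG : IndepFun (fun ω i => H i ω) (fun ω j => G j ω) P)
    (s : Finset ℕ) {B : ℕ → Set ℕ} (hB : ∀ j ∈ s, MeasurableSet (B j)) :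
    P (⋂ j ∈ s, {ω | blockMax (H · ω) (G · ω) j ∈ B j})
      = ∏ j ∈ s, ∫⁻ ω, P {ω' | (range (G j₀ ω)).sup (H · ω') ∈ B j} ∂P := by
  set φ : ℕ → ℕ → ENNReal := fun j g => P {ω' | (range g).sup (H · ω') ∈ B j}
  have hA : MeasurableSet
      (⋂ j ∈ s, (fun p : (ℕ → ℕ) × (ℕ → ℕ) => blockMax p.1 p.2 j) ⁻¹' B j) :=
    Finset.measurableSet_biInter s fun j hj => measurable_blockMax j (hB j hj)
  have hcond := hHG.measure_preimage_eq_lintegral (measurable_pi_lambda _ hHmeas)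
    (measurable_pi_lambda _ hGmeas) hA
  have hindep : iIndepFun (fun j ω => φ j (G (j + 1) ω)) P :=
    (hGindep.precomp (g := (· + 1)) (add_left_injective 1)).comp φ
      fun _ => measurable_of_countable _
  calc P (⋂ j ∈ s, {ω | blockMax (H · ω) (G · ω) j ∈ B j})
      = ∫⁻ ω, P (⋂ j ∈ s, {ω' | blockMax (H · ω') (G · ω) j ∈ B j}) ∂P := by
        simp_rw [Set.preimage_iInter₂] at hcond
        exact hcond
    _ = ∫⁻ ω, ∏ j ∈ s, φ j (G (j + 1) ω) ∂P := by
        simp_rw [measure_iInter_blockMax_eq_prod hHmeas hHindep hHident _ s hB]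
        rfl
    _ = ∏ j ∈ s, ∫⁻ ω, φ j (G (j + 1) ω) ∂P :=
        lintegral_prod_eq_prod_lintegral_of_indepFun s _ hindep
          fun j => (measurable_of_countable (φ j)).comp (hGmeas (j + 1))
    _ = ∏ j ∈ s, ∫⁻ ω, φ j (G j₀ ω) ∂P := Finset.prod_congr rfl fun j _ =>
        ((hGident (j + 1)).comp (measurable_of_countable (φ j))).lintegral_eq

end BlockMaxima

theorem stmt_4_general
    {Ω : Type*} [MeasurableSpace Ω] (P : Measure Ω) [IsProbabilityMeasure P]
    (H : ℕ → Ω → ℕ)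
    (hHmeas : ∀ i, Measurable (H i))
    (hHindep : iIndepFun H P)
    (hHident : ∀ i, IdentDistrib (H i) (H 1) P P)
    (G : ℕ → Ω → ℕ)
    (hGmeas : ∀ j, Measurable (G j))
    (hGindep : iIndepFun G P)
    (hGident : ∀ j, IdentDistrib (G j) (G 1) P P)
    (hHG : IndepFun (fun ω => fun i => H i ω) (fun ω => fun j => G j ω) P)
    (S : ℕ → Ω → ℕ) (hS : ∀ j ω, S j ω = ∑ l ∈ Finset.Icc 1 j, G l ω)
    (M : ℕ → Ω → ℕ)
    (hM : ∀ j ω, M j ω = (Finset.Ioc (S j ω) (S (j + 1) ω)).sup (fun i => H i ω)) :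
    iIndepFun M P ∧ ∀ j, IdentDistrib (M j) (M 0) P P := by
  obtain rfl : M = fun j ω => blockMax (H · ω) (G · ω) j := by
    funext j ω; rw [hM, hS, hS]; rfl
  have hlaw := measure_iInter_blockMax_eq_prod_lintegral hHmeas hHindep hHident hGmeas hGindep
    hGident hHG
  have hMmeas : ∀ j, Measurable fun ω => blockMax (H · ω) (G · ω) j := fun j =>
    (measurable_blockMax j).comp ((measurable_pi_lambda _ hHmeas).prodMk
      (measurable_pi_lambda _ hGmeas))
  have hmarginal : ∀ j {B : Set ℕ}, MeasurableSet B →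
      P {ω | blockMax (H · ω) (G · ω) j ∈ B}
        = ∫⁻ ω, P {ω' | (range (G 1 ω)).sup (H · ω') ∈ B} ∂P := fun j B hB => by
    simpa using hlaw {j} (B := fun _ => B) fun _ _ => hB
  refine ⟨iIndepFun_iff_measure_inter_preimage_eq_mul.2 fun s B hB => ?_, fun j => ?_⟩
  · exact (hlaw s hB).trans (Finset.prod_congr rfl fun j hj => (hmarginal j (hB j hj)).symm)
  · refine ⟨(hMmeas j).aemeasurable, (hMmeas 0).aemeasurable, Measure.ext fun B hB => ?_⟩
    rw [Measure.map_apply (hMmeas j) hB, Measure.map_apply (hMmeas 0) hB]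
    exact (hmarginal j hB).trans (hmarginal 0 hB).symm

/-- If `(H_i)_{i ≥ 1}` are i.i.d. positive-integer-valued and `(G_j)_{j ≥ 1}`
are i.i.d. geometric(y) independent of `(H_i)`, with partial sums `S_j = G_1 + ⋯ + G_j`
and block maxima `M_j = max {H_i : S_{j-1} < i ≤ S_j}`, then `(M_j)_{j ≥ 1}` is i.i.d.
(Here `M j` denotes the `(j+1)`-st block maximum, i.e. the blocks are indexed by `j ≥ 0`.) -/
theorem stmt_4
    {Ω : Type*} [MeasurableSpace Ω] (P : Measure Ω) [IsProbabilityMeasure P]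
    (H : ℕ → Ω → ℕ)
    (hHmeas : ∀ i, Measurable (H i))
    (hHindep : iIndepFun H P)
    (hHident : ∀ i, IdentDistrib (H i) (H 1) P P)
    (hHpos : ∀ i ω, 1 ≤ H i ω)
    (y : ℝ) (hy : y ∈ Set.Ioo (0 : ℝ) 1)
    (G : ℕ → Ω → ℕ)
    (hGmeas : ∀ j, Measurable (G j))
    (hGindep : iIndepFun G P)
    (hGident : ∀ j, IdentDistrib (G j) (G 1) P P)
    (hGpos : ∀ j ω, 1 ≤ G j ω)
    (hGgeom : ∀ g : ℕ, 1 ≤ g → (P {ω | G 1 ω = g}).toReal = y * (1 - y) ^ (g - 1))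
    (hHG : IndepFun (fun ω => fun i => H i ω) (fun ω => fun j => G j ω) P)
    (S : ℕ → Ω → ℕ) (hS : ∀ j ω, S j ω = ∑ l ∈ Finset.Icc 1 j, G l ω)
    (M : ℕ → Ω → ℕ)
    (hM : ∀ j ω, M j ω = (Finset.Ioc (S j ω) (S (j + 1) ω)).sup (fun i => H i ω)) :
    iIndepFun M P ∧ ∀ j, IdentDistrib (M j) (M 0) P P :=
  stmt_4_general P H hHmeas hHindep hHident G hGmeas hGindep hGident hHG S hS M hM
end

section
/- Let δ ∈ (0,1) and let m ≥ k ≥ 1 be integers. For N geometric on {1,2,…} with ℙ(N = n) = δ(1−δ)^{n−1}, let I = (I_0,…,I_{N−1}) be, conditionally on N, a uniformly random 0-1 vector with exactly k ones when N ≥ k; and for y ∈ (0,1) let J(y) = (J_0(y),…,J_{N−1}(y)) be i.i.d. Bernoulli(y) marks with K := Σ J_i(y). Then for every vector i = (i_0,…,i_{m−1}) ∈ {0,1}^m with i_0 + ⋯ + i_{m−1} = k: ℙ(N = m, I = i | N ≥ k) = ∫_0^1 μ_k(y) · [ δ(1−δ)^{m−1} y^k (1−y)^{m−k} / (δ(1−δ)^{k−1}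 y^k / (1−(1−δ)(1−y))^{k+1}) ] dy, where μ_k(y) := kδ y^{k−1}/(1−(1−δ)(1−y))^{k+1}. Concretely, both sides equal δ(1−δ)^{m−k} / C(m,k), using ℙ(N ≥ k) = (1−δ)^{k−1} and ℙ(N = m, I = i) = δ(1−δ)^{m−1}/C(m,k). -/
open MeasureTheory ProbabilityTheory Set Nat

/-!
On `(0, 1)` the integrand collapses to `k δ (1-δ)^(m-k) y^(k-1) (1-y)^(m-k)`, and the Beta
integral `∫ y^(k-1) (1-y)^(m-k) = (k-1)! (m-k)! / m!` turns this into `δ (1-δ)^(m-k) / C(m,k)`.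

On the probability side the event `{N = m, I = i}` lies inside `{N ≥ k}`, so conditioning divides
`δ (1-δ)^(m-1) / C(m,k)` by the geometric tail `ℙ(N ≥ k) = (1-δ)^(k-1)`. Since `N` is not assumed
measurable, the tail is pinned down by subadditivity alone: the atoms `{N = n}`, `n ≥ k`, cover
`{N ≥ k}` and the finitely many atoms `n < k` cover its complement.
-/

theorem integral_Ioo_pow_mul_one_sub_pow (a b : ℕ) :
    ∫ x in Ioo (0 : ℝ) 1, x ^ a * (1 - x) ^ b = a ! * b ! / (a + b + 1)! := by
  have hintegral : Complex.betaIntegral (a + 1) (b + 1)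
      = ((∫ x in (0 : ℝ)..1, x ^ a * (1 - x) ^ b : ℝ) : ℂ) := by
    rw [Complex.betaIntegral, ← intervalIntegral.integral_ofReal]
    refine intervalIntegral.integral_congr fun x _ => ?_
    simp only [add_sub_cancel_right]
    rw [Complex.cpow_natCast, Complex.cpow_natCast]
    push_cast
    ring
  have hgamma : Complex.betaIntegral (a + 1) (b + 1) = ((a ! * b ! / (a + b + 1)! : ℝ) : ℂ) := by
    have hre_pos (n : ℕ) : 0 < ((n : ℂ) + 1).re := by
      simp only [Complex.add_re, Complex.natCast_re, Complex.one_re]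
      positivity
    rw [Complex.betaIntegral_eq_Gamma_mul_div _ _ (hre_pos a) (hre_pos b)]
    have hcast : (a + 1 + (b + 1) : ℂ) = ((a + b + 1 : ℕ) : ℂ) + 1 := by push_cast; ring
    rw [hcast, Complex.Gamma_nat_eq_factorial, Complex.Gamma_nat_eq_factorial,
      Complex.Gamma_nat_eq_factorial]
    push_cast
    rfl
  rw [← integral_Ioc_eq_integral_Ioo, ← intervalIntegral.integral_of_le zero_le_one]
  exact_mod_cast hintegral.symm.trans hgamma

theorem integral_Ioo_pow_pred_mul_one_sub_pow_sub {k m : ℕ} (hk : 1 ≤ k) (hkm : k ≤ m) :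
    ∫ y in Ioo (0 : ℝ) 1, (k : ℝ) * (y ^ (k - 1) * (1 - y) ^ (m - k)) = 1 / m.choose k := by
  rw [integral_const_mul, integral_Ioo_pow_mul_one_sub_pow,
    show k - 1 + (m - k) + 1 = m by omega, Nat.cast_choose ℝ hkm,
    ← Nat.mul_factorial_pred (by omega : k ≠ 0)]
  push_cast
  field_simp

theorem mixture_integrand_eq {δ y : ℝ} (hδ : δ ∈ Ioo 0 1) (hy : 0 < y) {k m : ℕ}
    (hk : 1 ≤ k) (hkm : k ≤ m) :
    ((k : ℝ) * δ * y ^ (k - 1) / (1 - (1 - δ) * (1 - y)) ^ (k + 1)) *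
        (δ * (1 - δ) ^ (m - 1) * y ^ k * (1 - y) ^ (m - k)
          / (δ * (1 - δ) ^ (k - 1) * y ^ k / (1 - (1 - δ) * (1 - y)) ^ (k + 1)))
      = δ * (1 - δ) ^ (m - k) * (k * (y ^ (k - 1) * (1 - y) ^ (m - k))) := by
  obtain ⟨hδ₀, hδ₁⟩ := hδ
  have hD : 0 < 1 - (1 - δ) * (1 - y) := by nlinarith
  have hq : 1 - δ ≠ 0 := by linarith
  have hpow : (1 - δ) ^ (m - 1) = (1 - δ) ^ (m - k) * (1 - δ) ^ (k - 1) := by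
    rw [← pow_add, show m - k + (k - 1) = m - 1 by omega]
  rw [hpow]
  field_simp

theorem integral_mixture_eq {δ : ℝ} (hδ : δ ∈ Ioo 0 1) {k m : ℕ} (hk : 1 ≤ k) (hkm : k ≤ m) :
    (∫ y in Set.Ioo (0 : ℝ) 1,
        ((k : ℝ) * δ * y ^ (k - 1) / (1 - (1 - δ) * (1 - y)) ^ (k + 1)) *
          (δ * (1 - δ) ^ (m - 1) * y ^ k * (1 - y) ^ (m - k)
            / (δ * (1 - δ) ^ (k - 1) * y ^ k / (1 - (1 - δ) * (1 - y)) ^ (k + 1))))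
      = δ * (1 - δ) ^ (m - k) / (m.choose k : ℝ) := by
  rw [setIntegral_congr_fun measurableSet_Ioo fun y hy => mixture_integrand_eq hδ hy.1 hk hkm,
    integral_const_mul, integral_Ioo_pow_pred_mul_one_sub_pow_sub hk hkm, mul_one_div]

theorem cond_real_apply_of_subset {Ω : Type*} [MeasurableSpace Ω] (P : Measure Ω) {A B : Set Ω}
    (hAB : A ⊆ B) :
    (P[|B]).real A = P.real A / P.real B := by
  rw [ProbabilityTheory.cond, measureReal_def, Measure.smul_apply, Measure.restrict_eq_self P hAB,
    smul_eq_mul, ENNReal.toReal_mul, ENNReal.toReal_inv, div_eq_inv_mul, measureReal_def,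
    measureReal_def]

section GeometricTail

variable {Ω : Type*} [MeasurableSpace Ω] (P : Measure Ω) {δ : ℝ} {N : Ω → ℕ}

theorem measureReal_tail_le_pow [IsFiniteMeasure P] (hδ₀ : 0 < δ) (hδ₁ : δ ≤ 1)
    (hN : ∀ n, 1 ≤ n → P.real {ω | N ω = n} = δ * (1 - δ) ^ (n - 1)) {k : ℕ} (hk : 1 ≤ k) :
    P.real {ω | k ≤ N ω} ≤ (1 - δ) ^ (k - 1) := by
  have hcover : {ω | k ≤ N ω} ⊆ ⋃ j, {ω | N ω = k + j} := fun ω hω =>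
    mem_iUnion.2 ⟨N ω - k, by simp only [mem_ofPred_eq] at hω ⊢; omega⟩
  have hterm : ∀ j,
      P {ω | N ω = k + j} = ENNReal.ofReal (δ * (1 - δ) ^ (k - 1) * (1 - δ) ^ j) := by
    intro j
    rw [← ofReal_measureReal, hN _ (by omega), show k + j - 1 = k - 1 + j by omega, pow_add,
      mul_assoc]
  have hsum : HasSum (fun j => δ * (1 - δ) ^ (k - 1) * (1 - δ) ^ j) ((1 - δ) ^ (k - 1)) := by
    have := (hasSum_geometric_of_lt_one (r := 1 - δ) (by linarith) (by linarith)).mul_left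
      (δ * (1 - δ) ^ (k - 1))
    rwa [sub_sub_cancel, mul_right_comm, mul_inv_cancel₀ hδ₀.ne', one_mul] at this
  calc P.real {ω | k ≤ N ω} ≤ (∑' j, P {ω | N ω = k + j}).toReal := by
        refine ENNReal.toReal_mono ?_ ((measure_mono hcover).trans (measure_iUnion_le _))
        simp_rw [hterm]
        rw [← ENNReal.ofReal_tsum_of_nonneg (fun j => by positivity) hsum.summable]
        exact ENNReal.ofReal_ne_top
    _ = (1 - δ) ^ (k - 1) := by
        simp_rw [hterm]
        rw [← ENNReal.ofReal_tsum_of_nonneg (fun j => by positivity) hsum.summable, hsum.tsum_eq,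
          ENNReal.toReal_ofReal (by positivity)]

theorem measureReal_lt_le_one_sub_pow [IsFiniteMeasure P] (hNpos : ∀ ω, 1 ≤ N ω)
    (hN : ∀ n, 1 ≤ n → P.real {ω | N ω = n} = δ * (1 - δ) ^ (n - 1)) (k : ℕ) :
    P.real {ω | N ω < k} ≤ 1 - (1 - δ) ^ (k - 1) := by
  have hcover : {ω | N ω < k} ⊆ ⋃ n ∈ Finset.range (k - 1), {ω | N ω = n + 1} := fun ω hω => by
    have := hNpos ω
    simp only [mem_ofPred_eq, mem_iUnion, Finset.mem_range] at hω ⊢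
    exact ⟨N ω - 1, by omega, by omega⟩
  calc P.real {ω | N ω < k}
      ≤ ∑ n ∈ Finset.range (k - 1), P.real {ω | N ω = n + 1} :=
        (measureReal_mono hcover (measure_ne_top _ _)).trans (measureReal_biUnion_finset_le _ _)
    _ = (∑ n ∈ Finset.range (k - 1), (1 - δ) ^ n) * (1 - (1 - δ)) := by
        rw [Finset.sum_mul]
        refine Finset.sum_congr rfl fun n _ => ?_
        rw [hN _ (by omega), Nat.add_sub_cancel]
        ring
    _ = 1 - (1 - δ) ^ (k - 1) := geom_sum_mul_neg _ _

theorem measureReal_tail_eq_pow [IsProbabilityMeasure P] (hδ₀ : 0 < δ) (hδ₁ : δ ≤ 1)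
    (hNpos : ∀ ω, 1 ≤ N ω) (hN : ∀ n, 1 ≤ n → P.real {ω | N ω = n} = δ * (1 - δ) ^ (n - 1))
    {k : ℕ} (hk : 1 ≤ k) :
    P.real {ω | k ≤ N ω} = (1 - δ) ^ (k - 1) := by
  have hunion : {ω | k ≤ N ω} ∪ {ω | N ω < k} = univ := by
    ext ω; simp only [mem_union, mem_ofPred_eq, mem_univ, iff_true]; omega
  have := measureReal_union_le (μ := P) {ω | k ≤ N ω} {ω | N ω < k}
  rw [hunion, probReal_univ] at this
  linarith [measureReal_tail_le_pow P hδ₀ hδ₁ hN hk,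
    measureReal_lt_le_one_sub_pow P hNpos hN k]

end GeometricTail

theorem stmt_12_general
    {Ω : Type*} [MeasurableSpace Ω] (P : Measure Ω) [IsProbabilityMeasure P]
    (δ : ℝ) (hδ : δ ∈ Set.Ioo (0 : ℝ) 1)
    (k m : ℕ) (hk : 1 ≤ k) (hkm : k ≤ m)
    (N : Ω → ℕ) (hNpos : ∀ ω, 1 ≤ N ω)
    (hN : ∀ n : ℕ, 1 ≤ n → (P {ω | N ω = n}).toReal = δ * (1 - δ) ^ (n - 1))
    (II : ℕ → Ω → ℕ)
    (hunif : ∀ n : ℕ, k ≤ n → ∀ jv : ℕ → ℕ, (∀ t < n, jv t ≤ 1) →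
      (∑ t ∈ Finset.range n, jv t) = k →
      (P {ω | N ω = n ∧ ∀ t < n, II t ω = jv t}).toReal
        = (P {ω | N ω = n}).toReal / (n.choose k : ℝ))
    (iv : ℕ → ℕ) (hiv01 : ∀ t < m, iv t ≤ 1) (hivsum : (∑ t ∈ Finset.range m, iv t) = k) :
    ((P[|{ω | k ≤ N ω}]) {ω | N ω = m ∧ ∀ t < m, II t ω = iv t}).toReal
        = (∫ y in Set.Ioo (0 : ℝ) 1,
            ((k : ℝ) * δ * y ^ (k - 1) / (1 - (1 - δ) * (1 - y)) ^ (k + 1)) *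
              (δ * (1 - δ) ^ (m - 1) * y ^ k * (1 - y) ^ (m - k)
                / (δ * (1 - δ) ^ (k - 1) * y ^ k / (1 - (1 - δ) * (1 - y)) ^ (k + 1))))
      ∧ (∫ y in Set.Ioo (0 : ℝ) 1,
            ((k : ℝ) * δ * y ^ (k - 1) / (1 - (1 - δ) * (1 - y)) ^ (k + 1)) *
              (δ * (1 - δ) ^ (m - 1) * y ^ k * (1 - y) ^ (m - k)
                / (δ * (1 - δ) ^ (k - 1) * y ^ k / (1 - (1 - δ) * (1 - y)) ^ (k + 1))))
          = δ * (1 - δ) ^ (m - k) / (m.choose k : ℝ) := by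
  obtain ⟨hδ₀, hδ₁⟩ := hδ
  refine ⟨?_, integral_mixture_eq ⟨hδ₀, hδ₁⟩ hk hkm⟩
  rw [integral_mixture_eq ⟨hδ₀, hδ₁⟩ hk hkm]
  have hsub : {ω | N ω = m ∧ ∀ t < m, II t ω = iv t} ⊆ {ω | k ≤ N ω} :=
    fun ω hω => show k ≤ N ω by rw [hω.1]; exact hkm
  have hjoint : P.real {ω | N ω = m ∧ ∀ t < m, II t ω = iv t}
      = δ * (1 - δ) ^ (m - 1) / m.choose k := by
    rw [measureReal_def, hunif m hkm iv hiv01 hivsum, hN m (hk.trans hkm)]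
  have hq : 1 - δ ≠ 0 := by linarith
  refine (cond_real_apply_of_subset P hsub).trans ?_
  rw [hjoint, measureReal_tail_eq_pow P hδ₀ hδ₁.le hNpos hN hk,
    show m - 1 = m - k + (k - 1) by omega, pow_add]
  field_simp

/-- equality of the uniform `k`-sampling scheme and the mixed Bernoulli
sampling scheme. With `N` geometric(δ) and, conditionally on `N`, `I` a uniformly random
0-1 vector with exactly `k` ones (when `N ≥ k`), for every 0-1 vector `i` of length `m`
with `k` ones: `ℙ(N = m, I = i | N ≥ k)` equals the `μ_k`-mixture over `y` of the
corresponding Bernoulli quantity; concretely both sides equal `δ(1-δ)^{m-k}/C(m,k)`. -/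
theorem stmt_12
    {Ω : Type*} [MeasurableSpace Ω] (P : Measure Ω) [IsProbabilityMeasure P]
    (δ : ℝ) (hδ : δ ∈ Set.Ioo (0 : ℝ) 1)
    (k m : ℕ) (hk : 1 ≤ k) (hkm : k ≤ m)
    (N : Ω → ℕ) (hNpos : ∀ ω, 1 ≤ N ω)
    (hN : ∀ n : ℕ, 1 ≤ n → (P {ω | N ω = n}).toReal = δ * (1 - δ) ^ (n - 1))
    (II : ℕ → Ω → ℕ) (hII01 : ∀ t ω, II t ω ≤ 1)
    (hunif : ∀ n : ℕ, k ≤ n → ∀ jv : ℕ → ℕ, (∀ t < n, jv t ≤ 1) →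
      (∑ t ∈ Finset.range n, jv t) = k →
      (P {ω | N ω = n ∧ ∀ t < n, II t ω = jv t}).toReal
        = (P {ω | N ω = n}).toReal / (n.choose k : ℝ))
    (iv : ℕ → ℕ) (hiv01 : ∀ t < m, iv t ≤ 1) (hivsum : (∑ t ∈ Finset.range m, iv t) = k) :
    ((P[|{ω | k ≤ N ω}]) {ω | N ω = m ∧ ∀ t < m, II t ω = iv t}).toReal
        = (∫ y in Set.Ioo (0 : ℝ) 1,
            ((k : ℝ) * δ * y ^ (k - 1) / (1 - (1 - δ) * (1 - y)) ^ (k + 1)) *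
              (δ * (1 - δ) ^ (m - 1) * y ^ k * (1 - y) ^ (m - k)
                / (δ * (1 - δ) ^ (k - 1) * y ^ k / (1 - (1 - δ) * (1 - y)) ^ (k + 1))))
      ∧ (∫ y in Set.Ioo (0 : ℝ) 1,
            ((k : ℝ) * δ * y ^ (k - 1) / (1 - (1 - δ) * (1 - y)) ^ (k + 1)) *
              (δ * (1 - δ) ^ (m - 1) * y ^ k * (1 - y) ^ (m - k)
                / (δ * (1 - δ) ^ (k - 1) * y ^ k / (1 - (1 - δ) * (1 - y)) ^ (k + 1))))
          = δ * (1 - δ) ^ (m - k) / (m.choose k : ℝ) :=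
  stmt_12_general P δ hδ k m hk hkm N hNpos hN II hunif iv hiv01 hivsum
end
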